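/- There is a constant C₀ such that for every k ≥ 1 and every set of k points in the square [0, √k]², the shortest Hamiltonian tour through the points has length at most C₀·k. -/

import Mathlib

open Metric

noncomputable local instance {n : ℕ} : DecidableEq (EuclideanSpace ℝ (Fin n)) :=
  Classical.decEq _

noncomputable def plen {α : Type*} [PseudoMetricSpace α] : List α → ℝ
  | [] => 0
  | [_] => 0
  | a :: b :: l => dist a b + plen (b :: l)

noncomputable def clen {α : Type*} [PseudoMetricSpace α] : List α → ℝ
  | [] => 0
  | a :: l => plen (a :: l) + dist (l.getLastD a) a

noncomputable def minTourLen {α : Type*} [PseudoMetricSpace α] [DecidableEq α]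
    (S : Finset α) : ℝ :=
  sInf {L | ∃ l : List α, l.Nodup ∧ l.toFinset = S ∧ clen l = L}

/-! Cut the square `[0, q]²` into horizontal strips of height 1 and visit the points strip by
strip from bottom to top, each strip from left to right. Along this path every step costs at most
`1` plus the increase of the potential `F p = p₀ + (2q + 1)⌊p₁⌋`: a step within a strip moves right,
and a step up to a new strip may go back across the whole width `q`, which the jump of `F` by at
least `2q + 1` pays for. So the path has length at most `max F - min F + k ≤ 2q² + 2q + k`, the
closing edge adds at most `2q`, and `q = √k` gives a tour of length `O(k)`. -/

section TourLength

variable {α : Type*} [PseudoMetricSpace α]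

lemma plen_nonneg : ∀ l : List α, 0 ≤ plen l
  | [] | [_] => le_rfl
  | _ :: b :: l => add_nonneg dist_nonneg (plen_nonneg (b :: l))

lemma clen_nonneg : ∀ l : List α, 0 ≤ clen l
  | [] => le_rfl
  | _ :: _ => add_nonneg (plen_nonneg _) dist_nonneg

lemma minTourLen_le_clen [DecidableEq α] {S : Finset α} {l : List α} (hl : l.Nodup)
    (hS : l.toFinset = S) : minTourLen S ≤ clen l :=
  csInf_le ⟨0, fun _ ⟨l', _, _, hL⟩ => hL ▸ clen_nonneg l'⟩ ⟨l, hl, hS, rfl⟩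

lemma plen_cons_le_of_isChain (f : α → ℝ) (c : ℝ) :
    ∀ (a : α) (l : List α), (a :: l).IsChain (fun x y => dist x y ≤ f y - f x + c) →
      plen (a :: l) ≤ f (l.getLastD a) - f a + c * l.length
  | a, [], _ => by simp [plen]
  | a, b :: l, h => by
    rw [List.isChain_cons_cons] at h
    have ih := plen_cons_le_of_isChain f c b l h.2
    rw [plen, List.getLastD_cons, List.length_cons, Nat.cast_succ]
    linarith [h.1]

end TourLength

lemma Finset.exists_nodup_pairwise_key_le {α β : Type*} [DecidableEq α] [LinearOrder β]
    (S : Finset α) (key : α → β) :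
    ∃ l : List α, l.Nodup ∧ l.toFinset = S ∧ l.Pairwise (fun x y => key x ≤ key y) := by
  have hperm : (S.toList.mergeSort fun x y => decide (key x ≤ key y)).Perm S.toList :=
    List.mergeSort_perm _ _
  refine ⟨_, hperm.nodup_iff.2 S.nodup_toList, ?_, ?_⟩
  · rw [List.toFinset_eq_of_perm _ _ hperm, Finset.toList_toFinset]
  · simpa using List.pairwise_mergeSort (le := fun x y => decide (key x ≤ key y))
      (fun a b c hab hbc => by simpa using (of_decide_eq_true hab).trans (of_decide_eq_true hbc))
      (fun a b => by simpa using le_total (key a) (key b)) S.toList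

lemma minTourLen_le_of_potential {α β : Type*} [PseudoMetricSpace α] [DecidableEq α]
    [LinearOrder β] {S : Finset α} (hS : S.Nonempty) (key : α → β) (f : α → ℝ) {c m M D : ℝ}
    (hstep : ∀ x ∈ S, ∀ y ∈ S, key x ≤ key y → dist x y ≤ f y - f x + c)
    (hf : ∀ x ∈ S, f x ∈ Set.Icc m M) (hD : ∀ x ∈ S, ∀ y ∈ S, dist x y ≤ D) :
    minTourLen S ≤ M - m + c * (S.card - 1) + D := by
  obtain ⟨l, hnodup, hlS, hsorted⟩ := S.exists_nodup_pairwise_key_le key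
  have hmem : ∀ x ∈ l, x ∈ S := fun x hx => hlS ▸ List.mem_toFinset.2 hx
  obtain ⟨a, l, rfl⟩ : ∃ a l', l = a :: l' := List.exists_cons_of_ne_nil <| by
    rintro rfl; simp [← hlS] at hS
  have hcard : ((S.card : ℝ) - 1) = l.length := by
    rw [← hlS, List.toFinset_card_of_nodup hnodup, List.length_cons]; push_cast; ring
  have hpath := plen_cons_le_of_isChain f c a l
    (hsorted.imp_of_mem fun hx hy => hstep _ (hmem _ hx) _ (hmem _ hy)).isChain
  have ha := hmem a List.mem_cons_self
  have hlast := hmem _ List.getLastD_mem_cons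
  calc minTourLen S ≤ clen (a :: l) := minTourLen_le_clen hnodup hlS
    _ = plen (a :: l) + dist (l.getLastD a) a := rfl
    _ ≤ M - m + c * (S.card - 1) + D := by
      rw [hcard]
      linarith [(hf _ hlast).2, (hf a ha).1, hD _ hlast a ha]

lemma EuclideanSpace.dist_le_abs_add_abs (x y : EuclideanSpace ℝ (Fin 2)) :
    dist x y ≤ |x 0 - y 0| + |x 1 - y 1| := by
  rw [EuclideanSpace.dist_eq, Fin.sum_univ_two, Real.dist_eq, Real.dist_eq]
  refine Real.sqrt_le_iff.2 ⟨by positivity, ?_⟩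
  nlinarith [abs_nonneg (x 0 - y 0), abs_nonneg (x 1 - y 1)]

section Strips

noncomputable def stripKey (p : EuclideanSpace ℝ (Fin 2)) : ℤ ×ₗ ℝ := toLex (⌊p 1⌋, p 0)

noncomputable def stripPotential (q : ℝ) (p : EuclideanSpace ℝ (Fin 2)) : ℝ :=
  p 0 + (2 * q + 1) * ⌊p 1⌋

variable {q : ℝ} {x y : EuclideanSpace ℝ (Fin 2)}

lemma stripPotential_mem_Icc (hx : ∀ i, x i ∈ Set.Icc 0 q) :
    stripPotential q x ∈ Set.Icc 0 (2 * q ^ 2 + 2 * q) := by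
  obtain ⟨hx0, hx0q⟩ := hx 0
  obtain ⟨hx1, hx1q⟩ := hx 1
  have hfloor : (0 : ℝ) ≤ ⌊x 1⌋ := by exact_mod_cast Int.floor_nonneg.2 hx1
  have hfloorq : (⌊x 1⌋ : ℝ) ≤ q := (Int.floor_le _).trans hx1q
  unfold stripPotential
  constructor <;> nlinarith

lemma dist_le_stripPotential_sub (hx : ∀ i, x i ∈ Set.Icc 0 q) (hy : ∀ i, y i ∈ Set.Icc 0 q)
    (hxy : stripKey x ≤ stripKey y) :
    dist x y ≤ stripPotential q y - stripPotential q x + 1 := by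
  obtain ⟨hx0, hx0q⟩ := hx 0
  obtain ⟨hy0, hy0q⟩ := hy 0
  have hx1 := Int.floor_le (x 1)
  have hx1' := Int.lt_floor_add_one (x 1)
  have hy1 := Int.floor_le (y 1)
  have hy1' := Int.lt_floor_add_one (y 1)
  have hd := EuclideanSpace.dist_le_abs_add_abs x y
  unfold stripPotential
  rcases Prod.Lex.toLex_le_toLex.1 hxy with hlt | ⟨heq, hle⟩
  · have hlt : (⌊x 1⌋ : ℝ) + 1 ≤ ⌊y 1⌋ := by exact_mod_cast hlt
    have h0 : |x 0 - y 0| ≤ q := abs_le.2 ⟨by linarith, by linarith⟩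
    have h1 : |x 1 - y 1| ≤ ⌊y 1⌋ - ⌊x 1⌋ + 1 := abs_le.2 ⟨by linarith, by linarith⟩
    nlinarith
  · have heq : (⌊x 1⌋ : ℝ) = ⌊y 1⌋ := by exact_mod_cast heq
    have h0 : |x 0 - y 0| = y 0 - x 0 := by
      rw [abs_sub_comm, abs_of_nonneg (sub_nonneg.2 hle)]
    have h1 : |x 1 - y 1| ≤ 1 := abs_le.2 ⟨by linarith, by linarith⟩
    rw [heq]
    linarith

lemma minTourLen_le_of_subset_square {S : Finset (EuclideanSpace ℝ (Fin 2))} (hS : S.Nonempty)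
    (hsq : ∀ x ∈ S, ∀ i, x i ∈ Set.Icc 0 q) :
    minTourLen S ≤ 2 * q ^ 2 + 4 * q + (S.card - 1) := by
  have hdiam : ∀ x ∈ S, ∀ y ∈ S, dist x y ≤ 2 * q := fun x hx y hy => by
    have h : ∀ i, |x i - y i| ≤ q := fun i =>
      abs_le.2 ⟨by linarith [(hsq x hx i).1, (hsq y hy i).2],
        by linarith [(hsq x hx i).2, (hsq y hy i).1]⟩
    linarith [EuclideanSpace.dist_le_abs_add_abs x y, h 0, h 1]
  have h := minTourLen_le_of_potential hS stripKey (stripPotential q) (c := 1)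
    (fun x hx y hy => dist_le_stripPotential_sub (hsq x hx) (hsq y hy))
    (fun x hx => stripPotential_mem_Icc (hsq x hx)) hdiam
  linarith

end Strips

/-- Few's bound: there is a constant C₀ such that any k points in
[0, √k]² admit a Hamiltonian tour of length at most C₀·k. -/
theorem stmt9 : ∃ C₀ : ℝ, ∀ (k : ℕ), 1 ≤ k →
    ∀ S : Finset (EuclideanSpace ℝ (Fin 2)), S.card = k →
      (∀ x ∈ S, ∀ i : Fin 2, x i ∈ Set.Icc (0 : ℝ) (Real.sqrt k)) →
      minTourLen S ≤ C₀ * k := by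
  refine ⟨7, fun k hk S hcard hsq => ?_⟩
  have hS : S.Nonempty := Finset.card_pos.1 (hcard ▸ hk)
  have hk1 : (1 : ℝ) ≤ k := by exact_mod_cast hk
  have hsqrt_sq : Real.sqrt k ^ 2 = k := Real.sq_sqrt (by positivity)
  have hsqrt_le : Real.sqrt k ≤ k := by nlinarith [Real.one_le_sqrt.2 hk1]
  have h := minTourLen_le_of_subset_square hS hsq
  rw [hcard, hsqrt_sq] at h
  linarith
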